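/- Let L be a code loop and let B and B₁ be two bases of L. Then the groups H_B(L) and H_{B₁}(L) of half-automorphisms fixing every element of B, respectively every element of B₁, have the same cardinality and are isomorphic as groups. -/

import Mathlib

/-- A loop: a binary operation with two-sided identity in which left and right
translations are bijections (equivalently, equations `a·x = b` and `y·a = b`
have unique solutions). -/
structure LoopStr (α : Type*) where
  mul : α → α → α
  one : α
  one_mul : ∀ x, mul one x = x
  mul_one : ∀ x, mul x one = x
  mulLeft_bij : ∀ a, Function.Bijective (fun x => mul a x)
  mulRight_bij : ∀ a, Function.Bijective (fun x => mul x a)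

lemma ZMod.two_eq_zero_or_one (c : ZMod 2) : c = 0 ∨ c = 1 := by decide +revert

namespace LoopStr

variable {α : Type*} (S : LoopStr α)

/-- A subset containing `1` and closed under multiplication and (left and right) inverses. -/
def IsClosed (T : Set α) : Prop :=
  S.one ∈ T ∧ (∀ x ∈ T, ∀ y ∈ T, S.mul x y ∈ T) ∧
    (∀ x ∈ T, ∀ y, S.mul x y = S.one → y ∈ T) ∧
    (∀ x ∈ T, ∀ y, S.mul y x = S.one → y ∈ T)

/-- The subloop generated by a set: the smallest closed subset containing it. -/
def gen (X : Set α) : Set α := ⋂₀ {T | X ⊆ T ∧ S.IsClosed T}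

def Generates (X : Set α) : Prop := S.gen X = Set.univ

/-- A basis: a minimal generating set. -/
def IsBasis (X : Set α) : Prop := S.Generates X ∧ ∀ Y ⊂ X, ¬ S.Generates Y

def IsHalfAut (f : α → α) : Prop :=
  Function.Bijective f ∧
    ∀ x y, f (S.mul x y) = S.mul (f x) (f y) ∨ f (S.mul x y) = S.mul (f y) (f x)

def IsAut (f : α → α) : Prop :=
  Function.Bijective f ∧ ∀ x y, f (S.mul x y) = S.mul (f x) (f y)

def IsAntiAut (f : α → α) : Prop :=
  Function.Bijective f ∧ ∀ x y, f (S.mul x y) = S.mul (f y) (f x)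

/-- The commutant of a loop. -/
def commutant : Set α := {c | ∀ x, S.mul c x = S.mul x c}

/-- The nucleus of a loop. -/
def nucleus : Set α :=
  {a | ∀ u v, S.mul (S.mul a u) v = S.mul a (S.mul u v) ∧
        S.mul (S.mul u a) v = S.mul u (S.mul a v) ∧
        S.mul (S.mul u v) a = S.mul u (S.mul v a)}

end LoopStr

/-- A code loop: a finite Moufang loop with a unique nontrivial square `neg` (written `-1`),
which (by Chein–Goodaire) is central of order 2, and all squares, commutators and
associators lie in `{1, neg}`. -/
structure CodeLoop (α : Type*) extends LoopStr α where
  finite : Finite α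
  moufang : ∀ x y z, mul (mul x (mul z x)) y = mul x (mul z (mul x y))
  neg : α
  neg_ne_one : neg ≠ one
  neg_is_square : ∃ x, mul x x = neg
  square_unique : ∀ m, m ≠ one → (∃ x, mul x x = m) → m = neg
  neg_mul_comm : ∀ x, mul neg x = mul x neg
  neg_mul_assoc₁ : ∀ x y, mul (mul neg x) y = mul neg (mul x y)
  neg_mul_assoc₂ : ∀ x y, mul (mul x neg) y = mul x (mul neg y)
  neg_mul_assoc₃ : ∀ x y, mul (mul x y) neg = mul x (mul y neg)
  neg_neg : mul neg neg = one
  square_mem : ∀ x, mul x x = one ∨ mul x x = neg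
  comm_mem : ∀ x y, mul x y = mul y x ∨ mul x y = mul (mul y x) neg
  assoc_mem : ∀ x y z, mul (mul x y) z = mul x (mul y z) ∨
      mul (mul x y) z = mul (mul x (mul y z)) neg

/-- The left-normed product `a_σ` of the basis elements indexed by `σ`, in increasing order. -/
def aSig {α : Type*} (S : LoopStr α) {n : ℕ} (a : Fin n → α) (σ : Finset (Fin n)) : α :=
  ((σ.sort (· ≤ ·)).map a).foldl S.mul S.one

/-!
Let `V = L/{±1}`; it is an elementary abelian 2-group, and a basis of `L` projects to a basis
of `V` over `𝔽₂`. A half-automorphism fixing a generating set is a sign map `x ↦ ±x`. Each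
linear form `l` on `V` gives an automorphism `t_l : x ↦ (-1)^{l(x̄)} x`, which commutes with
every sign map. For `f ∈ H_B` let `l_f` be the linear form whose value at `b̄` (`b ∈ B₁`) is the
sign of `f` at `b`; then `f ↦ f ∘ t_{l_f}` maps `H_B` into `H_{B₁}`, is multiplicative because
`l_{φψ} = l_φ + l_ψ`, and the same construction from `B₁` back to `B` inverts it.
-/

namespace LoopStr

variable {α : Type*} (S : LoopStr α)

lemma gen_subset {X T : Set α} (hXT : X ⊆ T) (hT : S.IsClosed T) : S.gen X ⊆ T :=
  Set.sInter_subset_of_mem ⟨hXT, hT⟩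

lemma subset_gen (X : Set α) : X ⊆ S.gen X :=
  fun _ hx => Set.mem_sInter.2 fun _ hT => hT.1 hx

lemma isClosed_gen (X : Set α) : S.IsClosed (S.gen X) := by
  have hmem : ∀ {x}, x ∈ S.gen X ↔ ∀ T, X ⊆ T → S.IsClosed T → x ∈ T := by
    intro x
    simp [gen]
  refine ⟨hmem.2 fun T _ hT => hT.1, fun x hx y hy => hmem.2 fun T hXT hT => ?_,
    fun x hx y hxy => hmem.2 fun T hXT hT => ?_, fun x hx y hxy => hmem.2 fun T hXT hT => ?_⟩
  · exact hT.2.1 x (hmem.1 hx T hXT hT) y (hmem.1 hy T hXT hT)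
  · exact hT.2.2.1 x (hmem.1 hx T hXT hT) y hxy
  · exact hT.2.2.2 x (hmem.1 hx T hXT hT) y hxy

lemma isClosed_preimage {A : Type*} [AddCommGroup A] {g : α → A}
    (hg : ∀ x y, g (S.mul x y) = g x + g y) (W : AddSubgroup A) : S.IsClosed (g ⁻¹' W) := by
  have hg_one : g S.one = 0 := by simpa [S.one_mul] using hg S.one S.one
  refine ⟨by simp [hg_one], fun x hx y hy => ?_, fun x hx y hxy => ?_, fun x hx y hxy => ?_⟩
  · simpa [hg] using W.add_mem hx hy
  · have : g x + g y = 0 := by rw [← hg, hxy, hg_one]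
    simpa [eq_neg_of_add_eq_zero_right this] using W.neg_mem hx
  · have : g y + g x = 0 := by rw [← hg, hxy, hg_one]
    simpa [eq_neg_of_add_eq_zero_left this] using W.neg_mem hx

lemma Generates.map_mem {S : LoopStr α} {X : Set α} (hX : S.Generates X) {A : Type*}
    [AddCommGroup A] {g : α → A} (hg : ∀ x y, g (S.mul x y) = g x + g y) {W : AddSubgroup A}
    (hXW : ∀ x ∈ X, g x ∈ W) (x : α) : g x ∈ W := by
  have := S.gen_subset hXW (S.isClosed_preimage hg W)
  rw [hX] at this
  exact this (Set.mem_univ x)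

lemma Generates.ext_of_map_mul {S : LoopStr α} {X : Set α} (hX : S.Generates X) {A : Type*}
    [AddCommGroup A] {g h : α → A} (hg : ∀ x y, g (S.mul x y) = g x + g y)
    (hh : ∀ x y, h (S.mul x y) = h x + h y) (hXgh : ∀ x ∈ X, g x = h x) : g = h := by
  funext x
  have hsub : ∀ x y, (g - h) (S.mul x y) = (g - h) x + (g - h) y := by
    intro x y
    simp only [Pi.sub_apply, hg, hh]
    abel
  simpa [sub_eq_zero] using
    hX.map_mem hsub (W := ⊥) (fun x hx => by simp [hXgh x hx]) x

lemma IsHalfAut.map_one {S : LoopStr α} {f : α → α} (hf : S.IsHalfAut f) : f S.one = S.one := by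
  have hsq : S.mul (f S.one) (f S.one) = f S.one := by
    rcases hf.2 S.one S.one with h | h <;> rw [← h, S.one_mul]
  exact (S.mulLeft_bij (f S.one)).1 (by simp only [hsq, S.mul_one])

lemma IsHalfAut.comp {S : LoopStr α} {f g : α → α} (hf : S.IsHalfAut f) (hg : S.IsHalfAut g) :
    S.IsHalfAut (f ∘ g) := by
  refine ⟨hf.1.comp hg.1, fun x y => ?_⟩
  simp only [Function.comp_apply]
  rcases hg.2 x y with h | h <;> rw [h]
  · exact hf.2 _ _
  · exact (hf.2 _ _).symm

end LoopStr

namespace CodeLoop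

variable {α : Type*} (C : CodeLoop α)

lemma neg_mul_neg_mul (x : α) : C.mul C.neg (C.mul C.neg x) = x := by
  rw [← C.neg_mul_assoc₁, C.neg_neg, C.one_mul]

lemma mul_neg_mul (x y : α) : C.mul x (C.mul C.neg y) = C.mul C.neg (C.mul x y) := by
  rw [C.neg_mul_comm y, ← C.neg_mul_assoc₃, C.neg_mul_comm]

lemma neg_mul_ne_self (x : α) : C.mul C.neg x ≠ x := fun h =>
  C.neg_ne_one ((C.mulRight_bij x).1 (by simp only [h, C.one_mul]))

/-- `signAct c x` is `(-1)^c · x`. -/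
def signAct (c : ZMod 2) (x : α) : α := if c = 0 then x else C.mul C.neg x

variable {C}

@[simp] lemma signAct_zero (x : α) : C.signAct 0 x = x := if_pos rfl

@[simp] lemma signAct_one (x : α) : C.signAct 1 x = C.mul C.neg x := if_neg one_ne_zero

lemma signAct_signAct (c d : ZMod 2) (x : α) :
    C.signAct c (C.signAct d x) = C.signAct (c + d) x := by
  rcases c.two_eq_zero_or_one with rfl | rfl <;> rcases d.two_eq_zero_or_one with rfl | rfl <;>
    simp [neg_mul_neg_mul, CharTwo.add_self_eq_zero]

lemma signAct_mul_signAct (c d : ZMod 2) (x y : α) :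
    C.mul (C.signAct c x) (C.signAct d y) = C.signAct (c + d) (C.mul x y) := by
  rcases c.two_eq_zero_or_one with rfl | rfl <;> rcases d.two_eq_zero_or_one with rfl | rfl <;>
    simp [C.neg_mul_assoc₁, mul_neg_mul, neg_mul_neg_mul, CharTwo.add_self_eq_zero]

lemma signAct_mem {T : Set α} (hT : C.IsClosed T) (hneg : C.neg ∈ T) (c : ZMod 2) {x : α}
    (hx : x ∈ T) : C.signAct c x ∈ T := by
  rcases c.two_eq_zero_or_one with rfl | rfl
  · simpa using hx
  · simpa using hT.2.1 _ hneg _ hx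

lemma exists_assoc_eq_signAct (x y z : α) :
    ∃ c, C.mul (C.mul x y) z = C.signAct c (C.mul x (C.mul y z)) := by
  rcases C.assoc_mem x y z with h | h
  · exact ⟨0, by simpa using h⟩
  · exact ⟨1, by rw [h, signAct_one, C.neg_mul_comm]⟩

lemma exists_comm_eq_signAct (x y : α) : ∃ c, C.mul x y = C.signAct c (C.mul y x) := by
  rcases C.comm_mem x y with h | h
  · exact ⟨0, by simpa using h⟩
  · exact ⟨1, by rw [h, signAct_one, C.neg_mul_comm]⟩

lemma exists_mul_self_eq_signAct (x : α) : ∃ c, C.mul x x = C.signAct c C.one := by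
  rcases C.square_mem x with h | h
  · exact ⟨0, by simpa using h⟩
  · exact ⟨1, by rw [h, signAct_one, C.mul_one]⟩

variable (C)

def signSetoid : Setoid α where
  r x y := ∃ c, y = C.signAct c x
  iseqv :=
    { refl := fun x => ⟨0, (signAct_zero x).symm⟩
      symm := fun {x y} ⟨c, h⟩ => ⟨c, by
        rw [h, signAct_signAct, CharTwo.add_self_eq_zero, signAct_zero]⟩
      trans := fun ⟨c, h⟩ ⟨d, h'⟩ => ⟨d + c, by rw [h', h, signAct_signAct]⟩ }

def SignQuotient : Type _ := Quotient C.signSetoid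

def proj (x : α) : C.SignQuotient := Quotient.mk C.signSetoid x

variable {C}

lemma proj_surjective : Function.Surjective C.proj := Quotient.mk_surjective

lemma proj_eq_proj_iff {x y : α} : C.proj x = C.proj y ↔ ∃ c, y = C.signAct c x :=
  Quotient.eq

@[simp] lemma proj_signAct (c : ZMod 2) (x : α) : C.proj (C.signAct c x) = C.proj x :=
  (proj_eq_proj_iff.2 ⟨c, rfl⟩).symm

instance : Add C.SignQuotient :=
  ⟨Quotient.map₂ C.mul fun _ _ ⟨c, hc⟩ _ _ ⟨d, hd⟩ => ⟨c + d, by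
    rw [hc, hd, signAct_mul_signAct]⟩⟩

instance : Zero C.SignQuotient := ⟨C.proj C.one⟩

/-- Every element of `L/{±1}` is its own inverse. -/
instance : Neg C.SignQuotient := ⟨id⟩

lemma proj_mul (x y : α) : C.proj (C.mul x y) = C.proj x + C.proj y := rfl

instance : AddCommGroup C.SignQuotient where
  add_assoc := by
    rintro ⟨x⟩ ⟨y⟩ ⟨z⟩
    obtain ⟨c, h⟩ := exists_assoc_eq_signAct x y z
    exact (proj_eq_proj_iff.2 ⟨c, h⟩).symm
  zero_add := by
    rintro ⟨x⟩
    exact congrArg C.proj (C.one_mul x)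
  add_zero := by
    rintro ⟨x⟩
    exact congrArg C.proj (C.mul_one x)
  neg_add_cancel := by
    rintro ⟨x⟩
    obtain ⟨c, h⟩ := exists_mul_self_eq_signAct x
    exact (proj_eq_proj_iff.2 ⟨c, h⟩).symm
  add_comm := by
    rintro ⟨x⟩ ⟨y⟩
    obtain ⟨c, h⟩ := exists_comm_eq_signAct x y
    exact (proj_eq_proj_iff.2 ⟨c, h⟩).symm
  nsmul := nsmulRec
  zsmul := zsmulRec

instance : Module (ZMod 2) C.SignQuotient :=
  AddCommGroup.zmodModule fun x => by rw [two_nsmul]; exact neg_add_cancel x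

open Submodule

lemma span_proj_of_generates {X : Set α} (hX : C.Generates X) :
    span (ZMod 2) (C.proj '' X) = ⊤ := by
  refine eq_top_iff.2 fun v _ => ?_
  obtain ⟨x, rfl⟩ := proj_surjective v
  exact hX.map_mem proj_mul (W := (span (ZMod 2) (C.proj '' X)).toAddSubgroup)
    (fun x hx => subset_span ⟨x, hx, rfl⟩) x

lemma generates_of_span_proj {X : Set α} (hX : span (ZMod 2) (C.proj '' X) = ⊤) :
    C.Generates X := by
  have hgen := C.isClosed_gen X
  let H : AddSubgroup C.SignQuotient :=
    { carrier := C.proj '' C.gen X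
      add_mem' := by
        rintro _ _ ⟨x, hx, rfl⟩ ⟨y, hy, rfl⟩
        exact ⟨C.mul x y, hgen.2.1 x hx y hy, rfl⟩
      zero_mem' := ⟨C.one, hgen.1, rfl⟩
      neg_mem' := id }
  have hlift : ∀ x, ∃ g ∈ C.gen X, C.proj x = C.proj g := by
    intro x
    have hle : span (ZMod 2) (C.proj '' X) ≤ AddSubgroup.toZModSubmodule 2 H :=
      span_le.2 (Set.image_mono (C.subset_gen X))
    obtain ⟨g, hg, hgx⟩ : C.proj x ∈ H := hle (hX ▸ mem_top)
    exact ⟨g, hg, hgx.symm⟩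
  -- `-1 = a²` lifts to `g ∈ ⟨X⟩` with `g = ±a`, so `-1 = g² ∈ ⟨X⟩`.
  have hneg : C.neg ∈ C.gen X := by
    obtain ⟨a, ha⟩ := C.neg_is_square
    obtain ⟨g, hg, hag⟩ := hlift a
    obtain ⟨c, rfl⟩ := proj_eq_proj_iff.1 hag
    have hsq : C.mul (C.signAct c a) (C.signAct c a) = C.neg := by
      rw [signAct_mul_signAct, CharTwo.add_self_eq_zero, signAct_zero, ha]
    exact hsq ▸ hgen.2.1 _ hg _ hg
  refine Set.eq_univ_of_forall fun x => ?_
  obtain ⟨g, hg, hxg⟩ := hlift x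
  obtain ⟨c, rfl⟩ := proj_eq_proj_iff.1 hxg.symm
  exact signAct_mem hgen hneg c hg

lemma linearIndepOn_proj {B : Set α} (hB : C.IsBasis B) : LinearIndepOn (ZMod 2) C.proj B := by
  refine linearIndepOn_iff_notMem_span.2 fun b hb hspan => ?_
  refine hB.2 (B \ {b}) (Set.sdiff_singleton_ssubset.2 hb) (generates_of_span_proj ?_)
  rw [eq_top_iff, ← span_proj_of_generates hB.1, span_le]
  rintro _ ⟨c, hc, rfl⟩
  by_cases hcb : c = b
  · exact hcb ▸ hspan
  · exact subset_span ⟨c, ⟨hc, hcb⟩, rfl⟩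

noncomputable def basisOfIsBasis {B : Set α} (hB : C.IsBasis B) :
    Module.Basis B (ZMod 2) C.SignQuotient :=
  Module.Basis.mk (linearIndepOn_proj hB) (by rw [← Set.image_eq_range, span_proj_of_generates hB.1])

lemma basisOfIsBasis_apply {B : Set α} (hB : C.IsBasis B) (b : B) :
    basisOfIsBasis hB b = C.proj b :=
  Module.Basis.mk_apply _ _ _

variable {f g : α → α}

lemma _root_.LoopStr.IsHalfAut.map_neg (hf : C.IsHalfAut f) : f C.neg = C.neg := by
  obtain ⟨a, ha⟩ := C.neg_is_square
  have hsq : f C.neg = C.mul (f a) (f a) := by rcases hf.2 a a with h | h <;> rw [← ha, h]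
  rcases C.square_mem (f a) with h | h
  · exact absurd (hf.1.1 (by rw [hsq, h, hf.map_one])) C.neg_ne_one
  · rw [hsq, h]

lemma _root_.LoopStr.IsHalfAut.map_signAct (hf : C.IsHalfAut f) (c : ZMod 2) (x : α) :
    f (C.signAct c x) = C.signAct c (f x) := by
  rcases c.two_eq_zero_or_one with rfl | rfl
  · simp
  · rcases hf.2 C.neg x with h | h <;> rw [signAct_one, signAct_one, h, hf.map_neg]
    exact (C.neg_mul_comm _).symm

lemma _root_.LoopStr.IsHalfAut.proj_map_mul (hf : C.IsHalfAut f) (x y : α) :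
    C.proj (f (C.mul x y)) = C.proj (f x) + C.proj (f y) := by
  rcases hf.2 x y with h | h <;> rw [h, proj_mul]
  exact add_comm _ _

lemma _root_.LoopStr.IsHalfAut.proj_apply_of_generates (hf : C.IsHalfAut f) {X : Set α}
    (hX : C.Generates X) (hfX : ∀ x ∈ X, f x = x) (x : α) : C.proj (f x) = C.proj x :=
  congrFun (hX.ext_of_map_mul (g := C.proj ∘ f) hf.proj_map_mul proj_mul
    fun x hx => by simp [hfX x hx]) x

open Classical in
/-- The sign `c` with `f x = (-1)^c · x`; junk unless `f x = ±x`. -/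
noncomputable def signOf (f : α → α) (x : α) : ZMod 2 := if f x = x then 0 else 1

lemma signOf_eq_of_apply_eq {x : α} {c : ZMod 2} (h : f x = C.signAct c x) :
    signOf f x = c := by
  rcases c.two_eq_zero_or_one with rfl | rfl
  · simp [signOf, h]
  · simp [signOf, h, neg_mul_ne_self]

lemma signAct_signOf {x : α} (h : C.proj (f x) = C.proj x) : C.signAct (signOf f x) x = f x := by
  obtain ⟨c, hc⟩ := proj_eq_proj_iff.1 h.symm
  rw [signOf_eq_of_apply_eq hc, hc]

lemma signOf_comp (hf : C.IsHalfAut f) (hfp : ∀ x, C.proj (f x) = C.proj x)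
    (hgp : ∀ x, C.proj (g x) = C.proj x) (x : α) :
    signOf (f ∘ g) x = signOf f x + signOf g x := by
  refine signOf_eq_of_apply_eq (C := C) ?_
  rw [Function.comp_apply, ← signAct_signOf (hgp x), hf.map_signAct, ← signAct_signOf (hfp x),
    signAct_signAct, add_comm]

def twist (l : C.SignQuotient →ₗ[ZMod 2] ZMod 2) (x : α) : α := C.signAct (l (C.proj x)) x

variable (l m : C.SignQuotient →ₗ[ZMod 2] ZMod 2)

lemma twist_mul (x y : α) : twist l (C.mul x y) = C.mul (twist l x) (twist l y) := by
  rw [twist, twist, twist, signAct_mul_signAct, proj_mul, map_add]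

lemma twist_add (x : α) : twist (l + m) x = twist l (twist m x) := by
  rw [twist, twist, twist, proj_signAct, signAct_signAct, LinearMap.add_apply]

lemma twist_twist (x : α) : twist l (twist l x) = x := by
  rw [← twist_add, twist, LinearMap.add_apply, CharTwo.add_self_eq_zero, signAct_zero]

lemma isHalfAut_twist : C.IsHalfAut (twist l) :=
  ⟨Function.Involutive.bijective (twist_twist l), fun x y => Or.inl (twist_mul l x y)⟩

lemma twist_apply_comm (hf : C.IsHalfAut f) (hfp : ∀ x, C.proj (f x) = C.proj x) (x : α) :
    twist l (f x) = f (twist l x) := by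
  rw [twist, twist, hfp, hf.map_signAct]

section Rebase

variable {B B₁ : Set α}

noncomputable def correction (hB : C.IsBasis B) (f : α → α) :
    C.SignQuotient →ₗ[ZMod 2] ZMod 2 :=
  (basisOfIsBasis hB).constr (ZMod 2) fun b => signOf f b

lemma correction_proj (hB : C.IsBasis B) (f : α → α) {b : α} (hb : b ∈ B) :
    correction hB f (C.proj b) = signOf f b := by
  rw [correction, ← basisOfIsBasis_apply hB ⟨b, hb⟩, Module.Basis.constr_basis]

lemma correction_comp (hB : C.IsBasis B) (hf : C.IsHalfAut f)
    (hfp : ∀ x, C.proj (f x) = C.proj x) (hgp : ∀ x, C.proj (g x) = C.proj x) :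
    correction hB (f ∘ g) = correction hB f + correction hB g := by
  simp only [correction, ← map_add]
  congr 1
  funext b
  exact signOf_comp hf hfp hgp b

/-- Corrects the signs of `f` on the basis `B₁`, so that the result fixes `B₁`. -/
noncomputable def rebase (hB₁ : C.IsBasis B₁) (f : α → α) : α → α :=
  f ∘ twist (correction hB₁ f)

lemma isHalfAut_rebase (hB₁ : C.IsBasis B₁) (hf : C.IsHalfAut f) : C.IsHalfAut (rebase hB₁ f) :=
  hf.comp (isHalfAut_twist _)

lemma rebase_apply (hB₁ : C.IsBasis B₁) (hf : C.IsHalfAut f) (x : α) :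
    rebase hB₁ f x = C.signAct (correction hB₁ f (C.proj x)) (f x) :=
  hf.map_signAct _ x

lemma rebase_apply_of_mem (hB₁ : C.IsBasis B₁) (hf : C.IsHalfAut f)
    (hfp : ∀ x, C.proj (f x) = C.proj x) {b : α} (hb : b ∈ B₁) : rebase hB₁ f b = b := by
  rw [rebase_apply hB₁ hf, correction_proj hB₁ f hb, ← signAct_signOf (hfp b),
    signAct_signAct, CharTwo.add_self_eq_zero, signAct_zero]

lemma rebase_comp (hB₁ : C.IsBasis B₁) (hf : C.IsHalfAut f) (hg : C.IsHalfAut g)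
    (hfp : ∀ x, C.proj (f x) = C.proj x) (hgp : ∀ x, C.proj (g x) = C.proj x) :
    rebase hB₁ (f ∘ g) = rebase hB₁ f ∘ rebase hB₁ g := by
  funext x
  simp only [rebase, Function.comp_apply, correction_comp hB₁ hf hfp hgp, twist_add,
    twist_apply_comm _ hg hgp]

lemma rebase_rebase (hB : C.IsBasis B) (hB₁ : C.IsBasis B₁) (hf : C.IsHalfAut f)
    (hfB : ∀ b ∈ B, f b = b) : rebase hB (rebase hB₁ f) = f := by
  have hcorr : correction hB (rebase hB₁ f) = correction hB₁ f := by
    refine (basisOfIsBasis hB).ext fun b => ?_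
    rw [basisOfIsBasis_apply, correction_proj hB _ b.2]
    refine signOf_eq_of_apply_eq (C := C) ?_
    rw [rebase_apply hB₁ hf, hfB b b.2]
  funext x
  change rebase hB₁ f (twist (correction hB (rebase hB₁ f)) x) = f x
  rw [hcorr, rebase, Function.comp_apply, twist_twist]

/-- `H_B(L)`. -/
abbrev HalfAutFixing (C : CodeLoop α) (B : Set α) : Type _ :=
  {f : α → α // C.IsHalfAut f ∧ ∀ b ∈ B, f b = b}

noncomputable def rebaseEquiv (hB : C.IsBasis B) (hB₁ : C.IsBasis B₁) :
    C.HalfAutFixing B ≃ C.HalfAutFixing B₁ where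
  toFun f := ⟨rebase hB₁ f, isHalfAut_rebase hB₁ f.2.1, fun _ =>
    rebase_apply_of_mem hB₁ f.2.1 (f.2.1.proj_apply_of_generates hB.1 f.2.2)⟩
  invFun g := ⟨rebase hB g, isHalfAut_rebase hB g.2.1, fun _ =>
    rebase_apply_of_mem hB g.2.1 (g.2.1.proj_apply_of_generates hB₁.1 g.2.2)⟩
  left_inv f := Subtype.ext (rebase_rebase hB hB₁ f.2.1 f.2.2)
  right_inv g := Subtype.ext (rebase_rebase hB₁ hB g.2.1 g.2.2)

lemma rebaseEquiv_comp (hB : C.IsBasis B) (hB₁ : C.IsBasis B₁) (φ ψ : C.HalfAutFixing B) :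
    (rebaseEquiv hB hB₁ φ : α → α) ∘ (rebaseEquiv hB hB₁ ψ : α → α) =
      rebase hB₁ ((φ : α → α) ∘ ψ) :=
  (rebase_comp hB₁ φ.2.1 ψ.2.1 (φ.2.1.proj_apply_of_generates hB.1 φ.2.2)
    (ψ.2.1.proj_apply_of_generates hB.1 ψ.2.2)).symm

end Rebase

end CodeLoop

/-- For two bases `B`, `B₁` of a code loop, the groups `H_B(L)` and `H_{B₁}(L)` are
isomorphic (in particular equinumerous): there is a bijection between them respecting
composition. -/
theorem stmt8 {α : Type*} (C : CodeLoop α) (B B₁ : Set α)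
    (hB : C.toLoopStr.IsBasis B) (hB₁ : C.toLoopStr.IsBasis B₁) :
    ∃ e : {f : α → α // C.toLoopStr.IsHalfAut f ∧ ∀ b ∈ B, f b = b} ≃
        {f : α → α // C.toLoopStr.IsHalfAut f ∧ ∀ b ∈ B₁, f b = b},
      ∀ φ ψ ρ : {f : α → α // C.toLoopStr.IsHalfAut f ∧ ∀ b ∈ B, f b = b},
        (φ : α → α) ∘ (ψ : α → α) = (ρ : α → α) →
          ((e φ : α → α)) ∘ ((e ψ : α → α)) = ((e ρ : α → α)) :=
  ⟨CodeLoop.rebaseEquiv hB hB₁, fun φ ψ ρ h => by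
    rw [CodeLoop.rebaseEquiv_comp, h]
    rfl⟩
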